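/- A snake graph with d ≥ 1 tiles has exactly two perfect matchings consisting only of boundary edges; these are called the minimal and maximal matchings. -/

import Mathlib

/-!
Abstract snake graphs (Canakci–Schiffler, "Snake graph calculus II"), modelled
concretely on the unit square lattice in the plane.

A tile is a unit lattice square; a snake graph is a sequence of tiles, each
subsequent tile lying to the north or to the east of the previous one.
-/

/-- A lattice point in the plane. -/
abbrev Pt : Type := ℤ × ℤ

/-- An edge of the unit square lattice: a base point together with an orientation flag.
`(p, false)` is the horizontal edge from `p` to `p + (1,0)`;
`(p, true)` is the vertical edge from `p` to `p + (0,1)`. -/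
abbrev Edge : Type := Pt × Bool

namespace SnakeCalc

open scoped Classical

noncomputable section

/-- The two endpoints of a lattice edge. -/
def ends (e : Edge) : Finset Pt :=
  {e.1, if e.2 then (e.1.1, e.1.2 + 1) else (e.1.1 + 1, e.1.2)}

/-- Translation of an edge by a vector. -/
def tr (v : Pt) (e : Edge) : Edge := ((e.1.1 + v.1, e.1.2 + v.2), e.2)

/-- Difference of two lattice points. -/
def psub (p q : Pt) : Pt := (p.1 - q.1, p.2 - q.2)

/-- Rotation of an edge by 180 degrees; the rotation sends the unit square with corners
`(0,0)` and `(1,1)` to the unit square with corners `c - (1,1)` and `c`. -/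
def rot (c : Pt) (e : Edge) : Edge :=
  if e.2 then ((c.1 - e.1.1, c.2 - e.1.2 - 1), true)
  else ((c.1 - e.1.1 - 1, c.2 - e.1.2), false)

/-- South edge of the unit tile with southwest corner `p`. -/
def south (p : Pt) : Edge := (p, false)

/-- North edge of the unit tile with southwest corner `p`. -/
def north (p : Pt) : Edge := ((p.1, p.2 + 1), false)

/-- West edge of the unit tile with southwest corner `p`. -/
def west (p : Pt) : Edge := (p, true)

/-- East edge of the unit tile with southwest corner `p`. -/
def east (p : Pt) : Edge := ((p.1 + 1, p.2), true)

/-- The canonical sign function on lattice edges (signs are booleans): on every unit tile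
the north and west edges get the same sign, the south and east edges get the same sign,
and the north and south edges get opposite signs. -/
def canonSign (e : Edge) : Bool :=
  if e.2 then decide ¬((e.1.1 + e.1.2) % 2 = 0) else decide ((e.1.1 + e.1.2) % 2 = 0)

/-- An abstract snake graph with `n + 1 ≥ 1` tiles `G_0, …, G_n`.
`dir i` (for `i < n`) records whether tile `i+1` is glued to the north (`true`)
or to the east (`false`) of tile `i`; the values `dir i` for `i ≥ n` are irrelevant. -/
structure SnakeGraph where
  n : ℕ
  dir : ℕ → Bool

namespace SnakeGraph

variable (G : SnakeGraph)

/-- The southwest corner of tile `i`. -/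
def pos : ℕ → Pt
  | 0 => ((0 : ℤ), (0 : ℤ))
  | i + 1 =>
      if G.dir i then ((pos i).1, (pos i).2 + 1) else ((pos i).1 + 1, (pos i).2)

/-- The four edges of the unit tile with southwest corner `p`. -/
def tileEdges (p : Pt) : Finset Edge := {south p, north p, west p, east p}

/-- The four vertices of the unit tile with southwest corner `p`. -/
def tileVertices (p : Pt) : Finset Pt :=
  {p, (p.1 + 1, p.2), (p.1, p.2 + 1), (p.1 + 1, p.2 + 1)}

/-- The edge set of the snake graph. -/
def edges : Finset Edge := (Finset.range (G.n + 1)).biUnion fun i => tileEdges (G.pos i)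

/-- The vertex set of the snake graph. -/
def vertices : Finset Pt := (Finset.range (G.n + 1)).biUnion fun i => tileVertices (G.pos i)

/-- The interior edge `e_i` shared by the tiles `i` and `i+1` (meaningful for `i < n`). -/
def ie (i : ℕ) : Edge := if G.dir i then north (G.pos i) else east (G.pos i)

/-- The set of interior edges of the snake graph. -/
def interiorEdges : Finset Edge := (Finset.range G.n).image fun i => G.ie i

/-- An edge of `G` which is not an interior edge is a boundary edge. -/
def IsBoundaryEdge (e : Edge) : Prop := e ∈ G.edges ∧ e ∉ G.interiorEdges

/-- The edges of the tiles `a, a+1, …, b` of `G` (in place). -/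
def segEdges (a b : ℕ) : Finset Edge :=
  (Finset.Icc a b).biUnion fun i => tileEdges (G.pos i)

/-- The interior edges of the segment of tiles `a, …, b` of `G`. -/
def segInterior (a b : ℕ) : Finset Edge := (Finset.Ico a b).image fun i => G.ie i

/-- The boundary edges of the segment of tiles `a, …, b` of `G`
(the boundary cycle of the union of these tiles). -/
def segBoundary (a b : ℕ) : Finset Edge := G.segEdges a b \ G.segInterior a b

/-- `f` is a sign function on `G`: on every tile of `G` the north and the west edge have the
same sign, the south and the east edge have the same sign, and the sign on the north edge is
opposite to the sign on the south edge. -/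
def IsSignFunction (f : Edge → Bool) : Prop :=
  ∀ i ≤ G.n,
    f (north (G.pos i)) = f (west (G.pos i)) ∧
    f (south (G.pos i)) = f (east (G.pos i)) ∧
    f (north (G.pos i)) = ! f (south (G.pos i))

/-- `e` is a north edge or an east edge of some tile of `G`. -/
def IsNE (e : Edge) : Prop := ∃ i ≤ G.n, e = north (G.pos i) ∨ e = east (G.pos i)

/-- `e` is a south edge or a west edge of some tile of `G`. -/
def IsSW (e : Edge) : Prop := ∃ i ≤ G.n, e = south (G.pos i) ∨ e = west (G.pos i)

/-- `P` is a perfect matching of `G`: a set of edges of `G` such that every vertex of `G` is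
incident to exactly one edge of `P`. -/
def IsPerfectMatching (P : Finset Edge) : Prop :=
  P ⊆ G.edges ∧ ∀ v ∈ G.vertices, (P.filter fun e => v ∈ ends e).card = 1

/-- The type of perfect matchings of `G`. -/
def Matchings := { P : Finset Edge // G.IsPerfectMatching P }

/-- The segment of tiles `a, …, b` of `G`, as a standalone snake graph (based at the origin). -/
def segment (a b : ℕ) : SnakeGraph := ⟨b - a, fun k => G.dir (a + k)⟩

/-- The reversed segment of tiles `b, b-1, …, a` of `G`, as a standalone snake graph. -/
def revSegment (a b : ℕ) : SnakeGraph := ⟨b - a, fun k => G.dir (b - 1 - k)⟩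

end SnakeGraph

/-- Concatenation of two snake graphs, the first tile of `K` being glued to the last tile
of `H` in direction `d` (`true` = north, `false` = east). -/
def concat (H K : SnakeGraph) (d : Bool) : SnakeGraph :=
  ⟨H.n + 1 + K.n, fun k => if k < H.n then H.dir k else if k = H.n then d else K.dir (k - H.n - 1)⟩

/-- A possibly degenerate snake graph: the zero element, a single edge, or an honest
snake graph. -/
inductive SnakeObj
  | zero
  | edge
  | graph (G : SnakeGraph)

/-- Perfect matchings of a possibly degenerate snake graph: the zero object has none, the
single edge has exactly one, and a snake graph has its usual perfect matchings. -/
def SnakeObj.Matchings : SnakeObj → Type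
  | .zero => Empty
  | .edge => PUnit
  | .graph G => G.Matchings

/-- `G ∖ pred(e)`, where `e` is the first edge among the interior edges `e_j` (`j ≥ a`) of `G`
together with the north-east edges of the last tile whose sign agrees with the sign of the
reference edge `r`: remove all predecessors of `e`.  If no interior edge qualifies, `e` is a
north-east edge of the last tile and the result is a single edge. -/
def SnakeGraph.cutPredFrom (G : SnakeGraph) (a : ℕ) (r : Edge) : SnakeObj :=
  if h : ∃ j, a ≤ j ∧ j < G.n ∧ canonSign (G.ie j) = canonSign r then
    .graph ⟨G.n - (Nat.find h + 1), fun k => G.dir (Nat.find h + 1 + k)⟩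
  else .edge

/-- `G ∖ succ(e)`, where `e` is the last edge among the south-west edges of the first tile
together with the interior edges of `G` whose sign agrees with the sign of `r`. -/
def SnakeGraph.cutSuccAt (G : SnakeGraph) (r : Edge) : SnakeObj :=
  if _ : ∃ j, j < G.n ∧ canonSign (G.ie j) = canonSign r then
    .graph ⟨Nat.findGreatest (fun j => j < G.n ∧ canonSign (G.ie j) = canonSign r) G.n, G.dir⟩
  else .edge

/-- `G ∖ pred(e) ∖ succ(e')`, where `e` is the first edge with sign equal to that of `r` and
`e'` is the last edge with sign equal to that of `r'` (both among interior edges, with the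
degenerate conventions of the paper); the result may be zero. -/
def SnakeGraph.cutBothAt (G : SnakeGraph) (r r' : Edge) : SnakeObj :=
  if h : ∃ j, j < G.n ∧ canonSign (G.ie j) = canonSign r then
    if _ : ∃ j, j < G.n ∧ canonSign (G.ie j) = canonSign r' then
      let j₁ := Nat.find h
      let j₂ := Nat.findGreatest (fun j => j < G.n ∧ canonSign (G.ie j) = canonSign r') G.n
      if j₁ < j₂ then .graph ⟨j₂ - (j₁ + 1), fun k => G.dir (j₁ + 1 + k)⟩
      else if j₁ = j₂ then .edge
      else .zero
    else .zero
  else .zero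

end

end SnakeCalc

/-!
Gluing a new tile along the side `e = ab` of the last tile makes `e` interior and adds two
vertices `a', b'` and three edges `sa = aa'`, `sb = bb'`, `e' = a'b'`. A boundary matching of
the larger graph avoids `e`, so at `a'` and `b'` it contains either `e'` alone or both `sa` and
`sb`. Hence `Q ↦ Q - e + sa + sb` (if `e ∈ Q`) and `Q ↦ Q + e'` (otherwise) is a bijection
between the boundary matchings of the two graphs: for an old vertex `v`, `sa` and `sb` together
cover `v` exactly when `e` does. By induction the count is that of a single tile, which has the
two matchings `{S, N}` and `{W, E}`.
-/

namespace SnakeCalc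

open Finset

def deg (v : Pt) (P : Finset Edge) : ℕ := ∑ x ∈ P, if v ∈ ends x then 1 else 0

section Degree

variable {v : Pt} {x y : Edge} {P : Finset Edge}

lemma deg_insert (hx : x ∉ P) :
    deg v (insert x P) = (if v ∈ ends x then 1 else 0) + deg v P :=
  sum_insert hx

lemma deg_erase_add (hx : x ∈ P) :
    deg v (P.erase x) + (if v ∈ ends x then 1 else 0) = deg v P :=
  sum_erase_add _ _ hx

lemma deg_eq_zero (h : ∀ x ∈ P, v ∉ ends x) : deg v P = 0 :=
  sum_eq_zero fun x hx => if_neg (h x hx)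

lemma mem_iff_notMem_of_deg_eq_one (hv : deg v P = 1) (hx : v ∈ ends x) (hy : v ∈ ends y)
    (hxy : x ≠ y) (hP : ∀ z ∈ P, v ∈ ends z → z = x ∨ z = y) : x ∈ P ↔ y ∉ P := by
  have hfilter : P.filter (v ∈ ends ·) = ({x, y} : Finset Edge).filter (· ∈ P) := by
    ext z
    simp only [mem_filter, mem_insert, mem_singleton]
    constructor
    · exact fun ⟨hz, hvz⟩ => ⟨hP z hz hvz, hz⟩
    · rintro ⟨rfl | rfl, hz⟩ <;> tauto
  rw [deg, ← card_filter, hfilter] at hv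
  by_cases hxP : x ∈ P <;> by_cases hyP : y ∈ P <;>
    simp [filter_insert, filter_singleton, hxP, hyP, hxy] at hv ⊢

end Degree

def boundaryMatchings (V : Finset Pt) (E I : Finset Edge) : Set (Finset Edge) :=
  {P | P ⊆ E ∧ (∀ v ∈ V, deg v P = 1) ∧ ∀ x ∈ P, x ∉ I}

/-- A square `a b b' a'` glued along its side `e = ab` to the graph with vertices `V`, edges `E`
and interior edges `I`. -/
structure SquareGluing (V : Finset Pt) (E I : Finset Edge) where
  (e e' sa sb : Edge)
  (a b a' b' : Pt)
  ends_e : ends e = {a, b}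
  ends_e' : ends e' = {a', b'}
  ends_sa : ends sa = {a, a'}
  ends_sb : ends sb = {b, b'}
  a_ne_b : a ≠ b
  a'_notMem : a' ∉ V
  b'_notMem : b' ∉ V
  a'_ne_b' : a' ≠ b'
  e_mem : e ∈ E
  e_notMem : e ∉ I
  ends_subset : ∀ x ∈ E, ends x ⊆ V
  interior_subset : I ⊆ E

namespace SquareGluing

variable {V : Finset Pt} {E I : Finset Edge} (g : SquareGluing V E I)

def vertices : Finset Pt := V ∪ {g.a, g.b, g.a', g.b'}

def edges : Finset Edge := E ∪ {g.e, g.e', g.sa, g.sb}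

def interiorEdges : Finset Edge := insert g.e I

def extend (Q : Finset Edge) : Finset Edge :=
  if g.e ∈ Q then insert g.sa (insert g.sb (Q.erase g.e)) else insert g.e' Q

def restrict (P : Finset Edge) : Finset Edge :=
  if g.sa ∈ P then insert g.e (P ∩ E) else P ∩ E

variable {Q P : Finset Edge} {v : Pt} {x : Edge}

lemma a_mem : g.a ∈ V := g.ends_subset _ g.e_mem (by simp [g.ends_e])

lemma b_mem : g.b ∈ V := g.ends_subset _ g.e_mem (by simp [g.ends_e])

lemma ne_a' (hv : v ∈ V) : v ≠ g.a' := fun h => g.a'_notMem (h ▸ hv)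

lemma ne_b' (hv : v ∈ V) : v ≠ g.b' := fun h => g.b'_notMem (h ▸ hv)

lemma notMem_of_a'_mem (h : g.a' ∈ ends x) : x ∉ E :=
  fun hx => g.a'_notMem (g.ends_subset x hx h)

lemma notMem_of_b'_mem (h : g.b' ∈ ends x) : x ∉ E :=
  fun hx => g.b'_notMem (g.ends_subset x hx h)

lemma sa_notMem : g.sa ∉ E := g.notMem_of_a'_mem (by simp [g.ends_sa])

lemma sb_notMem : g.sb ∉ E := g.notMem_of_b'_mem (by simp [g.ends_sb])

lemma e'_notMem : g.e' ∉ E := g.notMem_of_a'_mem (by simp [g.ends_e'])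

lemma sa_ne_sb : g.sa ≠ g.sb := fun h => by
  have : g.a ∈ ends g.sb := h ▸ by simp [g.ends_sa]
  simp [g.ends_sb, g.a_ne_b, g.ne_b' g.a_mem] at this

lemma sa_ne_e' : g.sa ≠ g.e' := fun h => by
  have : g.a ∈ ends g.e' := h ▸ by simp [g.ends_sa]
  simp [g.ends_e', g.ne_a' g.a_mem, g.ne_b' g.a_mem] at this

lemma sb_ne_e' : g.sb ≠ g.e' := fun h => by
  have : g.b ∈ ends g.e' := h ▸ by simp [g.ends_sb]
  simp [g.ends_e', g.ne_a' g.b_mem, g.ne_b' g.b_mem] at this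

lemma ite_sa_add_ite_sb (hv : v ∈ V) :
    ((if v ∈ ends g.sa then 1 else 0) + if v ∈ ends g.sb then 1 else 0) =
      if v ∈ ends g.e then 1 else 0 := by
  simp only [g.ends_sa, g.ends_sb, g.ends_e, mem_insert, mem_singleton, g.ne_a' hv,
    g.ne_b' hv, or_false]
  rcases eq_or_ne v g.a with rfl | hva
  · simp [g.a_ne_b]
  · simp [hva]

lemma deg_extend_add_of_mem (hQ : Q ⊆ E) (he : g.e ∈ Q) :
    deg v (g.extend Q) + (if v ∈ ends g.e then 1 else 0) =
      (if v ∈ ends g.sa then 1 else 0) + (if v ∈ ends g.sb then 1 else 0) + deg v Q := by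
  have hsb : g.sb ∉ Q.erase g.e := fun h => g.sb_notMem (hQ (mem_of_mem_erase h))
  have hsa : g.sa ∉ insert g.sb (Q.erase g.e) := by
    simp only [mem_insert, not_or]
    exact ⟨g.sa_ne_sb, fun h => g.sa_notMem (hQ (mem_of_mem_erase h))⟩
  rw [extend, if_pos he, deg_insert hsa, deg_insert hsb, ← deg_erase_add (v := v) he]
  ring

lemma deg_extend_of_notMem (hQ : Q ⊆ E) (he : g.e ∉ Q) :
    deg v (g.extend Q) = (if v ∈ ends g.e' then 1 else 0) + deg v Q := by
  rw [extend, if_neg he, deg_insert fun h => g.e'_notMem (hQ h)]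

lemma deg_extend (hQ : Q ⊆ E) (hv : v ∈ V) : deg v (g.extend Q) = deg v Q := by
  by_cases he : g.e ∈ Q
  · have := g.deg_extend_add_of_mem (v := v) hQ he
    rw [g.ite_sa_add_ite_sb hv] at this
    omega
  · simp [g.deg_extend_of_notMem hQ he, g.ends_e', g.ne_a' hv, g.ne_b' hv]

lemma deg_extend_eq_one (hQ : Q ⊆ E) (hv : v = g.a' ∨ v = g.b') :
    deg v (g.extend Q) = 1 := by
  have hvV : v ∉ V := by rcases hv with rfl | rfl <;> simp [g.a'_notMem, g.b'_notMem]
  have hQv : deg v Q = 0 := deg_eq_zero fun x hx h => hvV (g.ends_subset x (hQ hx) h)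
  by_cases he : g.e ∈ Q
  · have := g.deg_extend_add_of_mem (v := v) hQ he
    rcases hv with rfl | rfl <;>
      simp [g.ends_sa, g.ends_sb, g.ends_e, g.a'_ne_b', g.a'_ne_b'.symm,
        (g.ne_a' g.a_mem).symm, (g.ne_a' g.b_mem).symm, (g.ne_b' g.a_mem).symm,
        (g.ne_b' g.b_mem).symm] at this <;>
      omega
  · rcases hv with rfl | rfl <;> simp [g.deg_extend_of_notMem hQ he, g.ends_e', hQv]

lemma mem_edges : x ∈ g.edges ↔ x ∈ E ∨ x = g.e' ∨ x = g.sa ∨ x = g.sb := by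
  simp only [edges, mem_union, mem_insert, mem_singleton]
  constructor
  · rintro (h | rfl | h) <;> [tauto; exact .inl g.e_mem; tauto]
  · tauto

lemma mem_vertices : v ∈ g.vertices ↔ v ∈ V ∨ v = g.a' ∨ v = g.b' := by
  simp only [vertices, mem_union, mem_insert, mem_singleton]
  constructor
  · rintro (h | rfl | rfl | h) <;> [tauto; exact .inl g.a_mem; exact .inl g.b_mem; tauto]
  · tauto

lemma eq_sa_or_eq_e'_of_a'_mem (hx : x ∈ g.edges) (h : g.a' ∈ ends x) :
    x = g.sa ∨ x = g.e' := by
  rcases g.mem_edges.mp hx with hx | rfl | rfl | rfl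
  · exact absurd hx (g.notMem_of_a'_mem h)
  · exact .inr rfl
  · exact .inl rfl
  · simp [g.ends_sb, (g.ne_a' g.b_mem).symm, g.a'_ne_b'] at h

lemma eq_sb_or_eq_e'_of_b'_mem (hx : x ∈ g.edges) (h : g.b' ∈ ends x) :
    x = g.sb ∨ x = g.e' := by
  rcases g.mem_edges.mp hx with hx | rfl | rfl | rfl
  · exact absurd hx (g.notMem_of_b'_mem h)
  · exact .inr rfl
  · simp [g.ends_sa, (g.ne_b' g.a_mem).symm, g.a'_ne_b'.symm] at h
  · exact .inl rfl

lemma restrict_extend (hQ : Q ⊆ E) : g.restrict (g.extend Q) = Q := by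
  by_cases he : g.e ∈ Q
  · rw [extend, if_pos he, restrict, if_pos (mem_insert_self _ _),
      insert_inter_of_notMem g.sa_notMem, insert_inter_of_notMem g.sb_notMem,
      inter_eq_left.mpr ((erase_subset _ _).trans hQ), insert_erase he]
  · have hsa : g.sa ∉ insert g.e' Q := by
      simp only [mem_insert, not_or]
      exact ⟨g.sa_ne_e', fun h => g.sa_notMem (hQ h)⟩
    rw [extend, if_neg he, restrict, if_neg hsa, insert_inter_of_notMem g.e'_notMem,
      inter_eq_left.mpr hQ]

lemma extend_restrict (hP : P ∈ boundaryMatchings g.vertices g.edges g.interiorEdges) :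
    g.extend (g.restrict P) = P := by
  obtain ⟨hP, hdeg, hbd⟩ := hP
  have heP : g.e ∉ P := fun h => hbd _ h (mem_insert_self _ _)
  have ha' := hdeg _ (g.mem_vertices.mpr (.inr (.inl rfl)))
  have hb' := hdeg _ (g.mem_vertices.mpr (.inr (.inr rfl)))
  have hsa : g.sa ∈ P ↔ g.e' ∉ P :=
    mem_iff_notMem_of_deg_eq_one ha' (by simp [g.ends_sa]) (by simp [g.ends_e']) g.sa_ne_e'
      fun _ hz => g.eq_sa_or_eq_e'_of_a'_mem (hP hz)
  have hsb : g.sb ∈ P ↔ g.e' ∉ P :=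
    mem_iff_notMem_of_deg_eq_one hb' (by simp [g.ends_sb]) (by simp [g.ends_e']) g.sb_ne_e'
      fun _ hz => g.eq_sb_or_eq_e'_of_b'_mem (hP hz)
  have hPE : ∀ x ∈ P, x ∈ E ∨ x = g.e' ∨ x = g.sa ∨ x = g.sb :=
    fun x hx => g.mem_edges.mp (hP hx)
  have heE : g.e ∉ P ∩ E := fun h => heP (mem_inter.mp h).1
  unfold restrict
  split_ifs with h
  · rw [extend, if_pos (mem_insert_self _ _), erase_insert heE]
    ext x
    simp only [mem_insert, mem_inter]
    constructor
    · rintro (rfl | rfl | ⟨hx, -⟩) <;> tauto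
    · intro hx
      rcases hPE x hx with hxE | rfl | rfl | rfl <;> tauto
  · rw [extend, if_neg heE]
    ext x
    simp only [mem_insert, mem_inter]
    constructor
    · rintro (rfl | ⟨hx, -⟩) <;> tauto
    · intro hx
      rcases hPE x hx with hxE | rfl | rfl | rfl <;> tauto

lemma mem_and_ne_of_mem_extend (hx : x ∈ g.extend Q) (hxE : x ∈ E) : x ∈ Q ∧ x ≠ g.e := by
  unfold extend at hx
  split_ifs at hx with he
  · simp only [mem_insert, mem_erase] at hx
    rcases hx with rfl | rfl | ⟨hne, hxQ⟩
    · exact absurd hxE g.sa_notMem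
    · exact absurd hxE g.sb_notMem
    · exact ⟨hxQ, hne⟩
  · rcases mem_insert.mp hx with rfl | hxQ
    · exact absurd hxE g.e'_notMem
    · exact ⟨hxQ, fun h => he (h ▸ hxQ)⟩

lemma extend_mem (hQ : Q ∈ boundaryMatchings V E I) :
    g.extend Q ∈ boundaryMatchings g.vertices g.edges g.interiorEdges := by
  obtain ⟨hQE, hdeg, hbd⟩ := hQ
  refine ⟨fun x hx => ?_, fun v hv => ?_, fun x hx hxI => ?_⟩
  · unfold extend at hx
    split_ifs at hx
    · simp only [mem_insert, mem_erase] at hx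
      rcases hx with rfl | rfl | ⟨-, hxQ⟩
      exacts [by simp [edges], by simp [edges], mem_union_left _ (hQE hxQ)]
    · rcases mem_insert.mp hx with rfl | hxQ
      exacts [by simp [edges], mem_union_left _ (hQE hxQ)]
  · by_cases hvV : v ∈ V
    · rw [g.deg_extend hQE hvV, hdeg v hvV]
    · exact g.deg_extend_eq_one hQE ((g.mem_vertices.mp hv).resolve_left hvV)
  · have hxE : x ∈ E := by
      rcases mem_insert.mp hxI with rfl | hxI
      exacts [g.e_mem, g.interior_subset hxI]
    obtain ⟨hxQ, hxe⟩ := g.mem_and_ne_of_mem_extend hx hxE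
    exact hbd x hxQ ((mem_insert.mp hxI).resolve_left hxe)

lemma restrict_mem (hP : P ∈ boundaryMatchings g.vertices g.edges g.interiorEdges) :
    g.restrict P ∈ boundaryMatchings V E I := by
  have hinv := g.extend_restrict hP
  obtain ⟨-, hdeg, hbd⟩ := hP
  have hQE : g.restrict P ⊆ E := by
    unfold restrict
    split_ifs
    exacts [insert_subset g.e_mem inter_subset_right, inter_subset_right]
  refine ⟨hQE, fun v hv => ?_, fun x hx hxI => ?_⟩
  · rw [← g.deg_extend hQE hv, hinv]
    exact hdeg v (g.mem_vertices.mpr (.inl hv))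
  · unfold restrict at hx
    split_ifs at hx
    · rcases mem_insert.mp hx with rfl | hx
      exacts [g.e_notMem hxI, hbd x (mem_inter.mp hx).1 (mem_insert_of_mem hxI)]
    · exact hbd x (mem_inter.mp hx).1 (mem_insert_of_mem hxI)

theorem bijOn_extend : Set.BijOn g.extend (boundaryMatchings V E I)
    (boundaryMatchings g.vertices g.edges g.interiorEdges) :=
  Set.InvOn.bijOn
    ⟨fun _ hQ => g.restrict_extend hQ.1, fun _ => g.extend_restrict⟩
    (fun _ => g.extend_mem) (fun _ => g.restrict_mem)

theorem encard_boundaryMatchings :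
    (boundaryMatchings g.vertices g.edges g.interiorEdges).encard =
      (boundaryMatchings V E I).encard := by
  rw [← g.bijOn_extend.image_eq, g.bijOn_extend.injOn.encard_image]

end SquareGluing

namespace SnakeGraph

variable (G : SnakeGraph)

def succ : SnakeGraph := ⟨G.n + 1, G.dir⟩

lemma pos_succ (i : ℕ) : G.succ.pos i = G.pos i := by
  induction i with
  | zero => rfl
  | succ i ih => simp only [pos, ih]; rfl

lemma ie_succ (i : ℕ) : G.succ.ie i = G.ie i := by
  simp only [ie, pos_succ]; rfl

lemma pos_add_one (i : ℕ) :
    G.pos (i + 1) =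
      if G.dir i then ((G.pos i).1, (G.pos i).2 + 1) else ((G.pos i).1 + 1, (G.pos i).2) :=
  rfl

lemma pos_fst_add_snd (i : ℕ) : (G.pos i).1 + (G.pos i).2 = i := by
  induction i with
  | zero => rfl
  | succ i ih => rw [pos_add_one]; split_ifs <;> push_cast <;> omega

lemma pos_le_pos {i j : ℕ} (h : i ≤ j) :
    (G.pos i).1 ≤ (G.pos j).1 ∧ (G.pos i).2 ≤ (G.pos j).2 := by
  induction j, h using Nat.le_induction with
  | base => exact ⟨le_rfl, le_rfl⟩
  | succ j _ ih => rw [pos_add_one]; split_ifs <;> dsimp only <;> omega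

lemma ie_fst_add_snd (i : ℕ) : (G.ie i).1.1 + (G.ie i).1.2 = i + 1 := by
  have := G.pos_fst_add_snd i
  unfold ie; split_ifs <;> simp only [north, east] <;> omega

lemma edges_succ : G.succ.edges = G.edges ∪ tileEdges (G.pos (G.n + 1)) := by
  rw [edges, show G.succ.n = G.n + 1 from rfl, range_add_one, biUnion_insert, union_comm]
  simp only [pos_succ]; rfl

lemma vertices_succ : G.succ.vertices = G.vertices ∪ tileVertices (G.pos (G.n + 1)) := by
  rw [vertices, show G.succ.n = G.n + 1 from rfl, range_add_one, biUnion_insert, union_comm]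
  simp only [pos_succ]; rfl

lemma interiorEdges_succ : G.succ.interiorEdges = insert (G.ie G.n) G.interiorEdges := by
  rw [interiorEdges, show G.succ.n = G.n + 1 from rfl, range_add_one, image_insert]
  simp only [ie_succ]; rfl

lemma tileEdges_subset_edges {i : ℕ} (hi : i ≤ G.n) : tileEdges (G.pos i) ⊆ G.edges :=
  subset_biUnion_of_mem (fun i => tileEdges (G.pos i)) (mem_range.mpr (by omega))

lemma ends_subset_vertices : ∀ x ∈ G.edges, ends x ⊆ G.vertices := by
  intro x hx
  obtain ⟨i, hi, hx⟩ := mem_biUnion.mp hx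
  intro v hv
  refine mem_biUnion.mpr ⟨i, hi, ?_⟩
  simp only [tileEdges, south, north, west, east, mem_insert, mem_singleton] at hx
  rcases hx with rfl | rfl | rfl | rfl <;>
    simp only [ends, mem_insert, mem_singleton, Bool.false_eq_true, if_true, if_false] at hv <;>
    rcases hv with rfl | rfl <;> simp [tileVertices]

lemma ie_mem_tileEdges (i : ℕ) : G.ie i ∈ tileEdges (G.pos i) := by
  unfold ie; split_ifs <;> simp [tileEdges]

lemma interiorEdges_subset_edges : G.interiorEdges ⊆ G.edges := by
  intro x hx
  obtain ⟨i, hi, rfl⟩ := mem_image.mp hx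
  exact G.tileEdges_subset_edges (mem_range.mp hi).le (G.ie_mem_tileEdges i)

lemma ie_notMem_interiorEdges : G.ie G.n ∉ G.interiorEdges := by
  intro h
  obtain ⟨i, hi, hie⟩ := mem_image.mp h
  have := congrArg (fun x : Edge => x.1.1 + x.1.2) hie
  simp only [ie_fst_add_snd] at this
  have := mem_range.mp hi
  omega

lemma le_of_mem_vertices {v : Pt} (hv : v ∈ G.vertices) :
    v.1 ≤ (G.pos G.n).1 + 1 ∧ v.2 ≤ (G.pos G.n).2 + 1 := by
  obtain ⟨i, hi, hv⟩ := mem_biUnion.mp hv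
  have := G.pos_le_pos (Nat.lt_succ_iff.mp (mem_range.mp hi))
  simp only [tileVertices, mem_insert, mem_singleton] at hv
  rcases hv with rfl | rfl | rfl | rfl <;> (try dsimp only) <;> omega

lemma exists_squareGluing : ∃ g : SquareGluing G.vertices G.edges G.interiorEdges,
    g.vertices = G.succ.vertices ∧ g.edges = G.succ.edges ∧
      g.interiorEdges = G.succ.interiorEdges := by
  have he_mem := G.tileEdges_subset_edges le_rfl (G.ie_mem_tileEdges G.n)
  have he_notMem := G.ie_notMem_interiorEdges
  have hbound := @le_of_mem_vertices G
  rw [G.vertices_succ, G.edges_succ, G.interiorEdges_succ, pos_add_one]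
  set q := G.pos G.n
  cases hd : G.dir G.n
  · simp only [ie, hd, Bool.false_eq_true, if_false] at he_mem he_notMem ⊢
    let g : SquareGluing G.vertices G.edges G.interiorEdges :=
      { e := east q, e' := east (q.1 + 1, q.2)
        sa := south (q.1 + 1, q.2), sb := north (q.1 + 1, q.2)
        a := (q.1 + 1, q.2), b := (q.1 + 1, q.2 + 1)
        a' := (q.1 + 1 + 1, q.2), b' := (q.1 + 1 + 1, q.2 + 1)
        ends_e := rfl, ends_e' := rfl, ends_sa := rfl, ends_sb := rfl
        a_ne_b := by simp, a'_ne_b' := by simp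
        a'_notMem := fun h => by have := hbound h; dsimp only at this; omega
        b'_notMem := fun h => by have := hbound h; dsimp only at this; omega
        e_mem := he_mem, e_notMem := he_notMem
        ends_subset := G.ends_subset_vertices
        interior_subset := G.interiorEdges_subset_edges }
    refine ⟨g, ?_, ?_, rfl⟩
    · ext v
      simp only [g, SquareGluing.vertices, tileVertices, mem_union, mem_insert, mem_singleton]
      tauto
    · ext x
      simp only [g, SquareGluing.edges, tileEdges, east, mem_union, mem_insert, mem_singleton]
      tauto
  · simp only [ie, hd, if_true] at he_mem he_notMem ⊢
    let g : SquareGluing G.vertices G.edges G.interiorEdges :=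
      { e := north q, e' := north (q.1, q.2 + 1)
        sa := west (q.1, q.2 + 1), sb := east (q.1, q.2 + 1)
        a := (q.1, q.2 + 1), b := (q.1 + 1, q.2 + 1)
        a' := (q.1, q.2 + 1 + 1), b' := (q.1 + 1, q.2 + 1 + 1)
        ends_e := rfl, ends_e' := rfl, ends_sa := rfl, ends_sb := rfl
        a_ne_b := by simp, a'_ne_b' := by simp
        a'_notMem := fun h => by have := hbound h; dsimp only at this; omega
        b'_notMem := fun h => by have := hbound h; dsimp only at this; omega
        e_mem := he_mem, e_notMem := he_notMem
        ends_subset := G.ends_subset_vertices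
        interior_subset := G.interiorEdges_subset_edges }
    refine ⟨g, rfl, ?_, rfl⟩
    ext x
    simp only [g, SquareGluing.edges, tileEdges, north, mem_union, mem_insert, mem_singleton]
    tauto

lemma mem_boundaryMatchings_iff {P : Finset Edge} :
    P ∈ boundaryMatchings G.vertices G.edges G.interiorEdges ↔
      G.IsPerfectMatching P ∧ ∀ x ∈ P, x ∉ G.interiorEdges := by
  simp only [boundaryMatchings, Set.mem_ofPred_eq, IsPerfectMatching, deg, card_filter, and_assoc]

lemma encard_boundaryMatchings_of_n_eq_zero (hn : G.n = 0) :
    (boundaryMatchings G.vertices G.edges G.interiorEdges).encard = 2 := by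
  have hV : G.vertices = {(0, 0), (1, 0), (0, 1), (1, 1)} := by
    simp [vertices, hn, tileVertices, pos]
  have hE : G.edges = {((0, 0), false), ((0, 1), false), ((0, 0), true), ((1, 0), true)} := by
    simp [edges, hn, tileEdges, pos, south, north, west, east]
  have hI : G.interiorEdges = ∅ := by simp [interiorEdges, hn]
  refine Set.encard_eq_two.mpr ⟨{((0, 0), false), ((0, 1), false)},
    {((0, 0), true), ((1, 0), true)}, by decide, Set.ext fun P => ?_⟩
  rw [hV, hE, hI]
  simp only [boundaryMatchings, notMem_empty, not_false_eq_true, implies_true, and_true,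
    Set.mem_ofPred_eq, Set.mem_insert_iff, Set.mem_singleton_iff]
  constructor
  · rintro ⟨hP, hdeg⟩
    have hP := mem_powerset.mpr hP
    fin_cases hP <;> revert hdeg <;> decide
  · rintro (rfl | rfl) <;> decide

theorem encard_boundaryMatchings :
    (boundaryMatchings G.vertices G.edges G.interiorEdges).encard = 2 := by
  obtain ⟨n, d⟩ := G
  induction n with
  | zero => exact encard_boundaryMatchings_of_n_eq_zero _ rfl
  | succ n ih =>
    obtain ⟨g, hV, hE, hI⟩ := exists_squareGluing ⟨n, d⟩
    rw [show (⟨n + 1, d⟩ : SnakeGraph) = (⟨n, d⟩ : SnakeGraph).succ from rfl,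
      ← hV, ← hE, ← hI, g.encard_boundaryMatchings, ih]

end SnakeGraph

/-- A snake graph with `d ≥ 1` tiles has exactly two perfect matchings
consisting only of boundary edges (the minimal and the maximal matching). -/
theorem exactly_two_boundary_matchings (G : SnakeGraph) :
    ∃ P₁ P₂ : Finset Edge, P₁ ≠ P₂ ∧
      (G.IsPerfectMatching P₁ ∧ ∀ e ∈ P₁, e ∉ G.interiorEdges) ∧
      (G.IsPerfectMatching P₂ ∧ ∀ e ∈ P₂, e ∉ G.interiorEdges) ∧
      ∀ P : Finset Edge, G.IsPerfectMatching P → (∀ e ∈ P, e ∉ G.interiorEdges) →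
        P = P₁ ∨ P = P₂ := by
  obtain ⟨P₁, P₂, hne, hS⟩ := Set.encard_eq_two.mp G.encard_boundaryMatchings
  have hmem (P : Finset Edge) :
      (G.IsPerfectMatching P ∧ ∀ e ∈ P, e ∉ G.interiorEdges) ↔ P = P₁ ∨ P = P₂ := by
    rw [← G.mem_boundaryMatchings_iff, hS, Set.mem_insert_iff, Set.mem_singleton_iff]
  exact ⟨P₁, P₂, hne, (hmem P₁).mpr (.inl rfl), (hmem P₂).mpr (.inr rfl),
    fun P hP hbd => (hmem P).mp ⟨hP, hbd⟩⟩

end SnakeCalc
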